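/- For n ≥ m ≥ k+1 ≥ 4, there exists an n-term graphical sequence S with degree sum (2m−6)n − (m−3)(m−2) such that no realization of S contains K_m − P_k as a subgraph; hence σ(K_m − P_k, n) ≥ (2m−6)n − (m−3)(m−2) + 2. -/

import Mathlib

open SimpleGraph

/-- The multiset of vertex degrees of a finite simple graph. -/
noncomputable def degMS {V : Type*} (G : SimpleGraph V) [Fintype V] : Multiset ℕ :=
  Finset.univ.val.map fun v => Nat.card (G.neighborSet v)

/-- `Contains G H` : `G` contains a copy of `H` as a subgraph. -/
def Contains {V W : Type*} (G : SimpleGraph V) (H : SimpleGraph W) : Prop :=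
  ∃ f : W ↪ V, ∀ a b, H.Adj a b → G.Adj (f a) (f b)

/-- `K_m - P_k` : the complete graph on `m` vertices minus the `k` edges of a path
on the vertices `0, 1, ..., k`. -/
def KmPk (m k : ℕ) : SimpleGraph (Fin m) :=
  ⊤ \ SimpleGraph.fromRel (fun i j => (i : ℕ) + 1 = (j : ℕ) ∧ (j : ℕ) ≤ k)

/-- The join `K_{m-3} + complement (K_{n-m+3})` realized on `Fin n`:
the first `m-3` vertices form a clique joined to all remaining vertices. -/
def joinH (n m : ℕ) : SimpleGraph (Fin n) :=
  SimpleGraph.fromRel (fun i _ => (i : ℕ) < m - 3)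

/-!
In a realization of `((n-1)^(m-3), (m-3)^(n-m+3))` the `m - 3` vertices of degree `n - 1` are
universal, so each of the other vertices, having degree `m - 3`, is adjacent to them only: the
remaining vertices form an independent set. A copy of `K_m - P_k` would have to place at least three
vertices in it, but three pairwise non-adjacent vertices of `K_m - P_k` would be pairwise
consecutive on the path. The bound on `σ` follows since this degree sum is even.
-/

open Finset

lemma degMS_eq_map_degree {V : Type*} [Fintype V] (G : SimpleGraph V) [DecidableRel G.Adj] :
    degMS G = univ.val.map fun v => G.degree v :=
  Multiset.map_congr rfl fun v _ => by
    rw [Nat.card_eq_fintype_card, card_neighborSet_eq_degree]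

lemma card_degMS {V : Type*} [Fintype V] (G : SimpleGraph V) :
    (degMS G).card = Fintype.card V := by
  simp [degMS]

lemma even_sum_degMS {V : Type*} [Fintype V] (G : SimpleGraph V) : Even (degMS G).sum := by
  classical
  rw [degMS_eq_map_degree, ← Finset.sum_eq_multiset_sum, sum_degrees_eq_twice_card_edges]
  exact even_two_mul _

lemma SimpleGraph.isIndepSet_compl_of_isUniversal {V : Type*} [Fintype V] [DecidableEq V]
    {G : SimpleGraph V} [DecidableRel G.Adj] {U : Finset V} (hU : ∀ u ∈ U, G.IsUniversal u)
    (hdeg : ∀ v ∉ U, G.degree v ≤ #U) :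
    G.IsIndepSet (↑Uᶜ : Set V) := by
  intro v hv w hw _ hvw
  simp only [coe_compl, Set.mem_compl_iff, mem_coe] at hv hw
  have hsub : U ⊆ G.neighborFinset v := fun u hu =>
    (G.mem_neighborFinset v u).mpr (hU u hu (by rintro rfl; exact hv hu)).symm
  have hnbr : G.neighborFinset v = U :=
    (eq_of_subset_of_card_le hsub (by rw [card_neighborFinset_eq_degree]; exact hdeg v hv)).symm
  exact hw (hnbr ▸ (G.mem_neighborFinset v w).mpr hvw)

open SimpleGraph

lemma KmPk_adj_of_not_consecutive {m k : ℕ} {a b : Fin m} (hab : a ≠ b)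
    (h : ¬ (a : ℕ) + 1 = b) (h' : ¬ (b : ℕ) + 1 = a) : (KmPk m k).Adj a b := by
  simp only [KmPk, sdiff_adj, top_adj, fromRel_adj]
  omega

lemma KmPk_card_le_two_of_isIndepSet {m k : ℕ} {s : Finset (Fin m)}
    (hs : (KmPk m k).IsIndepSet (s : Set (Fin m))) : #s ≤ 2 := by
  by_contra! h
  obtain ⟨a, ha, b, hb, c, hc, hab, hac, hbc⟩ := two_lt_card.mp h
  have consecutive : ∀ x ∈ s, ∀ y ∈ s, x ≠ y → (x : ℕ) + 1 = y ∨ (y : ℕ) + 1 = x := by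
    intro x hx y hy hxy
    by_contra! hcons
    exact hs hx hy hxy (KmPk_adj_of_not_consecutive hxy hcons.1 hcons.2)
  have := consecutive a ha b hb hab
  have := consecutive a ha c hc hac
  have := consecutive b hb c hc hbc
  omega

lemma Contains.KmPk_le_card_add_two {V : Type*} [Fintype V] [DecidableEq V]
    {G : SimpleGraph V} {m k : ℕ} (hG : Contains G (KmPk m k)) {U : Finset V}
    (hU : G.IsIndepSet (↑Uᶜ : Set V)) : m ≤ #U + 2 := by
  obtain ⟨f, hf⟩ := hG
  set A := univ.filter fun a => f a ∉ U
  have hA : #A ≤ 2 := KmPk_card_le_two_of_isIndepSet fun a ha b hb hab hadj =>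
    hU (by simpa [A] using ha) (by simpa [A] using hb) (f.injective.ne hab) (hf a b hadj)
  have hAc : #Aᶜ ≤ #U :=
    card_le_card_of_injOn f (fun a ha => by simpa [A] using ha) f.injective.injOn
  have := card_add_card_compl A
  simp only [Fintype.card_fin] at this
  omega

lemma joinH_adj {n m : ℕ} {v w : Fin n} :
    (joinH n m).Adj v w ↔ v ≠ w ∧ ((v : ℕ) < m - 3 ∨ (w : ℕ) < m - 3) := by
  simp [joinH, fromRel_adj]

instance (n m : ℕ) : DecidableRel (joinH n m).Adj :=
  fun _ _ => decidable_of_iff _ joinH_adj.symm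

lemma joinH_degree {n m : ℕ} (h : m - 3 ≤ n) (v : Fin n) :
    (joinH n m).degree v = if (v : ℕ) < m - 3 then n - 1 else m - 3 := by
  split_ifs with hv
  · have huniv : (joinH n m).IsUniversal v := fun w hvw => joinH_adj.mpr ⟨hvw, .inl hv⟩
    simpa using ((joinH n m).degree_eq_card_sub_one v).mpr huniv
  · have : (joinH n m).neighborFinset v = univ.filter fun w : Fin n => (w : ℕ) < m - 3 := by
      ext w
      simp only [mem_neighborFinset, joinH_adj, mem_filter, mem_univ, true_and]
      exact ⟨fun ⟨_, hw⟩ => hw.resolve_left hv,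
        fun hw => ⟨by rintro rfl; exact hv hw, .inr hw⟩⟩
    rw [← card_neighborFinset_eq_degree, this, Fin.card_filter_val_lt, min_eq_right h]

lemma degMS_joinH {n m : ℕ} (h : m - 3 ≤ n) :
    degMS (joinH n m) =
      Multiset.replicate (m - 3) (n - 1) + Multiset.replicate (n - (m - 3)) (m - 3) := by
  classical
  set p : Fin n → Prop := fun v => (v : ℕ) < m - 3
  have hcard : #(univ.filter p) = m - 3 := by
    rw [Fin.card_filter_val_lt, min_eq_right h]
  have hcard' : #(univ.filter fun v => ¬ p v) = n - (m - 3) := by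
    rw [filter_not, card_sdiff_of_subset (filter_subset _ _), hcard, card_univ, Fintype.card_fin]
  rw [degMS_eq_map_degree, ← Multiset.filter_add_not p univ.val, Multiset.map_add]
  congr 1
  · rw [Multiset.map_congr rfl fun v hv => by
      rw [joinH_degree h, if_pos (Multiset.of_mem_filter hv)], Multiset.map_const']
    exact congrArg (Multiset.replicate · _) hcard
  · rw [Multiset.map_congr rfl fun v hv => by
      rw [joinH_degree h, if_neg (Multiset.mem_filter.mp hv).2], Multiset.map_const']
    exact congrArg (Multiset.replicate · _) hcard'

lemma sum_degMS_joinH {n m : ℕ} (hm : 4 ≤ m) (hn : m ≤ n) :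
    (degMS (joinH n m)).sum = (2 * m - 6) * n - (m - 3) * (m - 2) := by
  rw [degMS_joinH (by omega), Multiset.sum_add, Multiset.sum_replicate, Multiset.sum_replicate,
    smul_eq_mul, smul_eq_mul]
  obtain ⟨c, rfl⟩ : ∃ c, m = c + 3 := ⟨m - 3, by omega⟩
  obtain ⟨r, rfl⟩ : ∃ r, n = c + r + 1 := ⟨n - c - 1, by omega⟩
  simp only [show c + 3 - 3 = c by omega, show 2 * (c + 3) - 6 = 2 * c by omega,
    show c + 3 - 2 = c + 1 by omega, show c + r + 1 - 1 = c + r by omega,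
    show c + r + 1 - c = r + 1 by omega]
  exact (Nat.sub_eq_of_eq_add (by ring)).symm

lemma not_contains_KmPk_of_degMS_eq_joinH {n m k : ℕ} (hm : 4 ≤ m) (hn : m ≤ n)
    {G : SimpleGraph (Fin n)} (hG : degMS G = degMS (joinH n m)) :
    ¬ Contains G (KmPk m k) := by
  classical
  intro hC
  rw [degMS_eq_map_degree, degMS_joinH (by omega)] at hG
  set U := univ.filter G.IsUniversal
  have hne : n - 1 ≠ m - 3 := by omega
  have huniv : ∀ v, G.IsUniversal v ↔ G.degree v = n - 1 := fun v => by
    rw [← degree_eq_card_sub_one, Fintype.card_fin]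
  have hUcard : #U = m - 3 := by
    have := congrArg (Multiset.count (n - 1)) hG
    rw [Multiset.count_map, Multiset.count_add, Multiset.count_replicate_self,
      Multiset.count_replicate, if_neg hne.symm, add_zero] at this
    rw [← this, card_def, filter_val]
    congr 1
    exact Multiset.filter_congr fun v _ => (huniv v).trans eq_comm
  have hdeg : ∀ v ∉ U, G.degree v ≤ #U := fun v hv => by
    have hmem : G.degree v ∈ Multiset.replicate (m - 3) (n - 1) +
        Multiset.replicate (n - (m - 3)) (m - 3) :=
      hG ▸ Multiset.mem_map_of_mem _ (mem_val.mpr (mem_univ v))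
    simp only [U, mem_filter, mem_univ, true_and, huniv] at hv
    simp only [Multiset.mem_add, Multiset.mem_replicate] at hmem
    omega
  have := hC.KmPk_le_card_add_two (U := U)
    (isIndepSet_compl_of_isUniversal (fun u hu => (mem_filter.mp hu).2) hdeg)
  omega

theorem stmt10 (n m k : ℕ) (hk : 4 ≤ k + 1) (hm : k + 1 ≤ m) (hn : m ≤ n) :
    (∃ s : Multiset ℕ, s.card = n ∧
      (∃ G : SimpleGraph (Fin n), degMS G = s) ∧
      s.sum = (2 * m - 6) * n - (m - 3) * (m - 2) ∧
      ∀ G : SimpleGraph (Fin n), degMS G = s → ¬ Contains G (KmPk m k)) ∧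
    (∀ l : ℕ, Even l →
      (∀ s : Multiset ℕ, s.card = n → (∃ G : SimpleGraph (Fin n), degMS G = s) →
        l ≤ s.sum →
        ∃ G : SimpleGraph (Fin n), degMS G = s ∧ Contains G (KmPk m k)) →
      (2 * m - 6) * n - (m - 3) * (m - 2) + 2 ≤ l) := by
  have hm4 : 4 ≤ m := hk.trans hm
  have hcard : (degMS (joinH n m)).card = n := by rw [card_degMS, Fintype.card_fin]
  have hsum := sum_degMS_joinH hm4 hn
  have hfree : ∀ G : SimpleGraph (Fin n), degMS G = degMS (joinH n m) →
      ¬ Contains G (KmPk m k) := fun _ => not_contains_KmPk_of_degMS_eq_joinH hm4 hn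
  refine ⟨⟨_, hcard, ⟨joinH n m, rfl⟩, hsum, hfree⟩, fun l hl hforce => ?_⟩
  have hlt : (degMS (joinH n m)).sum < l := by
    by_contra! hle
    obtain ⟨G, hG, hC⟩ := hforce _ hcard ⟨joinH n m, rfl⟩ hle
    exact hfree G hG hC
  obtain ⟨a, ha⟩ := hl
  obtain ⟨b, hb⟩ := even_sum_degMS (joinH n m)
  omega
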